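/- arXiv:1901.02099 — 2 statements merged into one kernel-verified Lean document; each statement's English description precedes it below -/
import Mathlib

section
/- Let σ be a permutation of {1,…,k} and let K : [0,1]×[0,1] → ℂ be a continuous kernel. If σ is a k-cycle (a single cycle of full support), then ∫_{[0,1]^k} ∏_{i=1}^k K(u_i, u_{σ(i)}) du_1 ⋯ du_k = tr(K^(k)), where K^(m) denotes the m-fold iterated kernel K^(m)(x,y) = ∫ K^(m-1)(x,z) K(z,y) dz with K^(1) = K and tr(K^(m)) = ∫ K^(m)(x,x) dx. -/
open MeasureTheory Finset

/-- Iterated kernels: `iterK K m = K^{(m+1)}`, i.e. `iterK K 0 = K = K^{(1)}` and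
`K^{(m+1)}(x,y) = ∫₀¹ K^{(m)}(x,z) K(z,y) dz`. -/
noncomputable def iterK (K : ℝ → ℝ → ℂ) : ℕ → ℝ → ℝ → ℂ
  | 0 => K
  | m + 1 => fun x y => ∫ z in Set.Icc (0:ℝ) 1, iterK K m x z * K z y

namespace CycTrace

noncomputable def μ01 : Measure ℝ := (volume : Measure ℝ).restrict (Set.Icc 0 1)

instance : IsProbabilityMeasure μ01 := by constructor; simp [μ01, Real.volume_Icc]

lemma cont_cons {n : ℕ} (x : ℝ) (j : Fin (n+1)) :
    Continuous fun v : Fin n → ℝ => (Fin.cons x v : Fin (n+1) → ℝ) j := by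
  induction j using Fin.cases with
  | zero => simpa using continuous_const
  | succ i => simpa using continuous_apply i

variable {L : ℝ → ℝ → ℂ} (hL : Continuous fun p : ℝ × ℝ => L p.1 p.2)
  {C : ℝ} (hC : ∀ a b, ‖L a b‖ ≤ C)

include hL hC in
lemma chain_int : ∀ (n : ℕ) (x y : ℝ),
    (∫ v : Fin n → ℝ,
        (∏ i : Fin n, L ((Fin.cons x v : Fin (n+1) → ℝ) i.castSucc)
            ((Fin.cons x v : Fin (n+1) → ℝ) i.succ))
          * L ((Fin.cons x v : Fin (n+1) → ℝ) (Fin.last n)) y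
      ∂(Measure.pi fun _ : Fin n => μ01)) = iterK L n x y := by
  have hC0 : 0 ≤ C := le_trans (norm_nonneg _) (hC 0 0)
  intro n
  induction n with
  | zero =>
    intro x y
    have : (fun v : Fin 0 → ℝ =>
        (∏ i : Fin 0, L ((Fin.cons x v : Fin 1 → ℝ) i.castSucc)
            ((Fin.cons x v : Fin 1 → ℝ) i.succ))
          * L ((Fin.cons x v : Fin 1 → ℝ) (Fin.last 0)) y) = fun _ => L x y := by
      funext v
      simp [Fin.last]
    rw [this, integral_const]
    simp [iterK]
  | succ n ih =>
    intro x y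
    have hmp := (measurePreserving_piFinSuccAbove (fun _ : Fin (n+1) => μ01) (Fin.last n))
    set e := MeasurableEquiv.piFinSuccAbove (fun _ : Fin (n+1) => ℝ) (Fin.last n) with he
    have hsymm : MeasurePreserving e.symm
        (μ01.prod (Measure.pi fun _ : Fin n => μ01)) (Measure.pi fun _ : Fin (n+1) => μ01) :=
      hmp.symm e
    rw [← hsymm.integral_comp']
    have hes : ∀ p : ℝ × (Fin n → ℝ), e.symm p = (Fin.snoc p.2 p.1 : Fin (n+1) → ℝ) := by
      intro p
      simp [he, MeasurableEquiv.piFinSuccAbove, Fin.insertNth_last', Fin.snocEquiv]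
    have hkey : (fun p : ℝ × (Fin n → ℝ) =>
          (∏ i : Fin (n+1), L ((Fin.cons x (e.symm p) : Fin (n+2) → ℝ) i.castSucc)
              ((Fin.cons x (e.symm p) : Fin (n+2) → ℝ) i.succ))
            * L ((Fin.cons x (e.symm p) : Fin (n+2) → ℝ) (Fin.last (n+1))) y)
        = fun p : ℝ × (Fin n → ℝ) =>
          ((∏ i : Fin n, L ((Fin.cons x p.2 : Fin (n+1) → ℝ) i.castSucc)
              ((Fin.cons x p.2 : Fin (n+1) → ℝ) i.succ))
            * L ((Fin.cons x p.2 : Fin (n+1) → ℝ) (Fin.last n)) p.1) * L p.1 y := by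
      funext p
      rw [hes p, Fin.cons_snoc_eq_snoc_cons, Fin.prod_univ_castSucc]
      simp only [Fin.snoc_castSucc, Fin.succ_castSucc, Fin.snoc_last, Fin.succ_last]
    rw [hkey]
    have hint : Integrable (fun p : ℝ × (Fin n → ℝ) =>
        ((∏ i : Fin n, L ((Fin.cons x p.2 : Fin (n+1) → ℝ) i.castSucc)
            ((Fin.cons x p.2 : Fin (n+1) → ℝ) i.succ))
          * L ((Fin.cons x p.2 : Fin (n+1) → ℝ) (Fin.last n)) p.1) * L p.1 y)
        (μ01.prod (Measure.pi fun _ : Fin n => μ01)) := by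
      have hWc : ∀ j : Fin (n+1),
          Continuous fun p : ℝ × (Fin n → ℝ) => (Fin.cons x p.2 : Fin (n+1) → ℝ) j :=
        fun j => (cont_cons x j).comp continuous_snd
      have hcont : Continuous (fun p : ℝ × (Fin n → ℝ) =>
          ((∏ i : Fin n, L ((Fin.cons x p.2 : Fin (n+1) → ℝ) i.castSucc)
              ((Fin.cons x p.2 : Fin (n+1) → ℝ) i.succ))
            * L ((Fin.cons x p.2 : Fin (n+1) → ℝ) (Fin.last n)) p.1) * L p.1 y) := by
        refine Continuous.mul (Continuous.mul ?_ ?_) ?_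
        · exact continuous_finset_prod _ fun i _ => hL.comp ((hWc i.castSucc).prodMk (hWc i.succ))
        · exact hL.comp ((hWc (Fin.last n)).prodMk continuous_fst)
        · exact hL.comp (continuous_fst.prodMk continuous_const)
      refine (integrable_const (C^n * C * C)).mono' hcont.aestronglyMeasurable ?_
      refine Filter.Eventually.of_forall fun p => ?_
      rw [norm_mul, norm_mul, norm_prod]
      have h1 : (∏ i : Fin n, ‖L ((Fin.cons x p.2 : Fin (n+1) → ℝ) i.castSucc)
          ((Fin.cons x p.2 : Fin (n+1) → ℝ) i.succ)‖) ≤ C^n := by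
        calc (∏ i : Fin n, ‖L _ _‖) ≤ ∏ _i : Fin n, C :=
              Finset.prod_le_prod (fun _ _ => norm_nonneg _) (fun i _ => hC _ _)
          _ = C^n := by simp [Finset.prod_const]
      have h2 := hC ((Fin.cons x p.2 : Fin (n+1) → ℝ) (Fin.last n)) p.1
      have h3 := hC p.1 y
      exact mul_le_mul (mul_le_mul h1 h2 (norm_nonneg _) (pow_nonneg hC0 n)) h3
        (norm_nonneg _) (by positivity)
    rw [integral_prod _ hint]
    have hinner : ∀ z : ℝ,
        (∫ v : Fin n → ℝ,
          ((∏ i : Fin n, L ((Fin.cons x v : Fin (n+1) → ℝ) i.castSucc)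
              ((Fin.cons x v : Fin (n+1) → ℝ) i.succ))
            * L ((Fin.cons x v : Fin (n+1) → ℝ) (Fin.last n)) z) * L z y
          ∂(Measure.pi fun _ : Fin n => μ01)) = iterK L n x z * L z y := by
      intro z
      rw [integral_mul_const, ih x z]
    simp only [hinner]
    simp only [iterK]
    rfl

lemma pi_restrict (n : ℕ) :
    (Measure.pi fun _ : Fin n => μ01)
      = (Measure.pi fun _ : Fin n => (volume : Measure ℝ)).restrict
          (Set.univ.pi fun _ => Set.Icc (0:ℝ) 1) := by
  refine Measure.pi_eq fun s hs => ?_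
  rw [Measure.restrict_apply (MeasurableSet.univ_pi hs)]
  rw [← Set.pi_inter_distrib]
  rw [Measure.pi_pi (fun _ : Fin n => (volume : Measure ℝ))]
  simp [μ01, Measure.restrict_apply (hs _)]

noncomputable def cl (t : ℝ) : ℝ := max 0 (min 1 t)

lemma cl_mem (t : ℝ) : cl t ∈ Set.Icc (0:ℝ) 1 :=
  ⟨le_max_left _ _, max_le (by norm_num) (min_le_left _ _)⟩

lemma cl_eq {t : ℝ} (ht : t ∈ Set.Icc (0:ℝ) 1) : cl t = t := by
  rcases ht with ⟨h0, h1⟩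
  simp [cl, min_eq_right h1, max_eq_right h0]

lemma cl_cont : Continuous cl := by
  unfold cl; fun_prop

lemma iterK_congr {K L : ℝ → ℝ → ℂ}
    (h : ∀ a ∈ Set.Icc (0:ℝ) 1, ∀ b ∈ Set.Icc (0:ℝ) 1, K a b = L a b) :
    ∀ n, ∀ a ∈ Set.Icc (0:ℝ) 1, ∀ b ∈ Set.Icc (0:ℝ) 1, iterK K n a b = iterK L n a b := by
  intro n
  induction n with
  | zero => exact h
  | succ n ih =>
    intro a ha b hb
    simp only [iterK]
    refine setIntegral_congr_fun measurableSet_Icc fun z hz => ?_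
    rw [ih a ha z hz, h z hz b hb]

lemma cont_consp {n : ℕ} (j : Fin (n+1)) :
    Continuous fun p : ℝ × (Fin n → ℝ) => (Fin.cons p.1 p.2 : Fin (n+1) → ℝ) j := by
  induction j using Fin.cases with
  | zero => simpa using continuous_fst
  | succ i => simp only [Fin.cons_succ]; exact (continuous_apply i).comp continuous_snd

end CycTrace


open CycTrace

/-- If `σ` is a `k`-cycle (a single cycle of full support) and `K` is a continuous kernel on
`[0,1]²`, then `∫_{[0,1]^k} ∏_i K(u_i, u_{σ(i)}) du = tr(K^{(k)})`. -/
theorem cycle_integral_eq_trace_iterated (k : ℕ) (hk : 1 ≤ k)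
    (σ : Equiv.Perm (Fin k)) (hcyc : σ.IsCycle) (hsupp : σ.support = Finset.univ)
    (K : ℝ → ℝ → ℂ)
    (hcont : ContinuousOn (fun p : ℝ × ℝ => K p.1 p.2)
      (Set.Icc (0:ℝ) 1 ×ˢ Set.Icc (0:ℝ) 1)) :
    (∫ u in Set.univ.pi (fun _ : Fin k => Set.Icc (0:ℝ) 1),
        ∏ i : Fin k, K (u i) (u (σ i)))
      = ∫ x in Set.Icc (0:ℝ) 1, iterK K (k - 1) x x := by
  -- k = m + 2
  obtain ⟨m, rfl⟩ : ∃ m, k = m + 2 := by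
    match k, hk with
    | 1, _ =>
      exfalso
      obtain ⟨a, ha, -⟩ := hcyc
      exact ha (Subsingleton.elim _ _)
    | (n+2), _ => exact ⟨n, rfl⟩
  have hk1 : m + 2 - 1 = m + 1 := rfl
  rw [hk1]
  -- the globally continuous bounded replacement L of K
  set L : ℝ → ℝ → ℂ := fun a b => K (cl a) (cl b) with hLdef
  have hLK : ∀ a ∈ Set.Icc (0:ℝ) 1, ∀ b ∈ Set.Icc (0:ℝ) 1, L a b = K a b := by
    intro a ha b hb
    simp [hLdef, cl_eq ha, cl_eq hb]
  have hL : Continuous fun p : ℝ × ℝ => L p.1 p.2 := by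
    have : (fun p : ℝ × ℝ => L p.1 p.2)
        = (fun p : ℝ × ℝ => K p.1 p.2) ∘ fun p : ℝ × ℝ => (cl p.1, cl p.2) := rfl
    rw [this]
    exact hcont.comp_continuous ((cl_cont.comp continuous_fst).prodMk
      (cl_cont.comp continuous_snd)) fun p => ⟨cl_mem _, cl_mem _⟩
  obtain ⟨C, hCK⟩ := (isCompact_Icc.prod isCompact_Icc).exists_bound_of_continuousOn hcont
  have hC : ∀ a b, ‖L a b‖ ≤ C := fun a b => hCK (cl a, cl b) ⟨cl_mem a, cl_mem b⟩
  have hC0 : 0 ≤ C := le_trans (norm_nonneg _) (hC 0 0)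
  -- replace K by L on both sides
  have hRHS : (∫ x in Set.Icc (0:ℝ) 1, iterK K (m+1) x x)
      = ∫ x in Set.Icc (0:ℝ) 1, iterK L (m+1) x x := by
    refine setIntegral_congr_fun measurableSet_Icc fun x hx => ?_
    exact iterK_congr (fun a ha b hb => (hLK a ha b hb).symm) _ x hx x hx
  rw [hRHS]
  have hLHS : (∫ u in Set.univ.pi (fun _ : Fin (m+2) => Set.Icc (0:ℝ) 1),
        ∏ i : Fin (m+2), K (u i) (u (σ i)))
      = ∫ u in Set.univ.pi (fun _ : Fin (m+2) => Set.Icc (0:ℝ) 1),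
        ∏ i : Fin (m+2), L (u i) (u (σ i)) := by
    refine setIntegral_congr_fun (MeasurableSet.univ_pi fun _ => measurableSet_Icc)
      fun u hu => ?_
    refine Finset.prod_congr rfl fun i _ => ?_
    exact (hLK _ (hu i (Set.mem_univ i)) _ (hu (σ i) (Set.mem_univ (σ i)))).symm
  rw [hLHS]
  -- move to the product probability measure
  rw [show ((volume : Measure (Fin (m+2) → ℝ)).restrict
      (Set.univ.pi fun _ : Fin (m+2) => Set.Icc (0:ℝ) 1))
      = Measure.pi fun _ : Fin (m+2) => μ01 by rw [MeasureTheory.volume_pi, ← pi_restrict]]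
  -- conjugate σ to the standard rotation
  have hconj : IsConj (finRotate (m+2)) σ :=
    (isCycle_finRotate).isConj hcyc (by rw [support_finRotate, hsupp])
  rw [isConj_iff] at hconj
  obtain ⟨π, hπ⟩ := hconj
  have hsc : ∀ j : Fin (m+2), σ (π j) = π (finRotate (m+2) j) := by
    intro j
    rw [← hπ]
    simp [Equiv.Perm.mul_apply]
  -- reindex the variables by π
  have hmpF := measurePreserving_piCongrLeft (fun _ : Fin (m+2) => μ01) (π : Fin (m+2) ≃ Fin (m+2))
  set F := MeasurableEquiv.piCongrLeft (fun _ : Fin (m+2) => ℝ) (π : Fin (m+2) ≃ Fin (m+2)) with hF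
  rw [← hmpF.integral_comp']
  have hre : (fun w : Fin (m+2) → ℝ => ∏ i : Fin (m+2), L (F w i) (F w (σ i)))
      = fun w : Fin (m+2) → ℝ => ∏ j : Fin (m+2), L (w j) (w (finRotate (m+2) j)) := by
    funext w
    rw [← Equiv.prod_comp (π : Fin (m+2) ≃ Fin (m+2))
      (fun i => L (F w i) (F w (σ i)))]
    refine Finset.prod_congr rfl fun j _ => ?_
    rw [hsc j]
    simp [hF, MeasurableEquiv.coe_piCongrLeft, Equiv.piCongrLeft_apply_apply]
  rw [hre]
  -- peel off the first coordinate
  have hmp0 := measurePreserving_piFinSuccAbove (fun _ : Fin (m+2) => μ01) 0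
  set e0 := MeasurableEquiv.piFinSuccAbove (fun _ : Fin (m+2) => ℝ) 0 with he0
  rw [← ((hmp0.symm e0).integral_comp')]
  have he0s : ∀ p : ℝ × (Fin (m+1) → ℝ),
      e0.symm p = (Fin.cons p.1 p.2 : Fin (m+2) → ℝ) := by
    intro p
    simp [he0, MeasurableEquiv.piFinSuccAbove, Fin.insertNth_zero', Fin.consEquiv]
  have hkey : (fun p : ℝ × (Fin (m+1) → ℝ) =>
        ∏ j : Fin (m+2), L ((e0.symm p) j) ((e0.symm p) (finRotate (m+2) j)))
      = fun p : ℝ × (Fin (m+1) → ℝ) =>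
        (∏ i : Fin (m+1), L ((Fin.cons p.1 p.2 : Fin (m+2) → ℝ) i.castSucc)
            ((Fin.cons p.1 p.2 : Fin (m+2) → ℝ) i.succ))
          * L ((Fin.cons p.1 p.2 : Fin (m+2) → ℝ) (Fin.last (m+1))) p.1 := by
    funext p
    rw [he0s p, Fin.prod_univ_castSucc]
    simp only [finRotate_succ_apply, Fin.coeSucc_eq_succ, Fin.last_add_one, Fin.cons_zero]
  rw [hkey]
  have hint : Integrable (fun p : ℝ × (Fin (m+1) → ℝ) =>
      (∏ i : Fin (m+1), L ((Fin.cons p.1 p.2 : Fin (m+2) → ℝ) i.castSucc)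
          ((Fin.cons p.1 p.2 : Fin (m+2) → ℝ) i.succ))
        * L ((Fin.cons p.1 p.2 : Fin (m+2) → ℝ) (Fin.last (m+1))) p.1)
      (μ01.prod (Measure.pi fun _ : Fin (m+1) => μ01)) := by
    have hcG : Continuous (fun p : ℝ × (Fin (m+1) → ℝ) =>
        (∏ i : Fin (m+1), L ((Fin.cons p.1 p.2 : Fin (m+2) → ℝ) i.castSucc)
            ((Fin.cons p.1 p.2 : Fin (m+2) → ℝ) i.succ))
          * L ((Fin.cons p.1 p.2 : Fin (m+2) → ℝ) (Fin.last (m+1))) p.1) := by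
      refine Continuous.mul ?_ ?_
      · exact continuous_finset_prod _ fun i _ =>
          hL.comp ((cont_consp i.castSucc).prodMk (cont_consp i.succ))
      · exact hL.comp ((cont_consp (Fin.last (m+1))).prodMk continuous_fst)
    refine (integrable_const (C^(m+1) * C)).mono' hcG.aestronglyMeasurable ?_
    refine Filter.Eventually.of_forall fun p => ?_
    rw [norm_mul, norm_prod]
    have h1 : (∏ i : Fin (m+1), ‖L ((Fin.cons p.1 p.2 : Fin (m+2) → ℝ) i.castSucc)
        ((Fin.cons p.1 p.2 : Fin (m+2) → ℝ) i.succ)‖) ≤ C^(m+1) := by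
      calc (∏ i : Fin (m+1), ‖L _ _‖) ≤ ∏ _i : Fin (m+1), C :=
            Finset.prod_le_prod (fun _ _ => norm_nonneg _) (fun i _ => hC _ _)
        _ = C^(m+1) := by simp [Finset.prod_const]
    have h2 := hC ((Fin.cons p.1 p.2 : Fin (m+2) → ℝ) (Fin.last (m+1))) p.1
    exact mul_le_mul h1 h2 (norm_nonneg _) (pow_nonneg hC0 _)
  rw [integral_prod _ hint]
  have hinner : ∀ x : ℝ,
      (∫ v : Fin (m+1) → ℝ,
        (∏ i : Fin (m+1), L ((Fin.cons x v : Fin (m+2) → ℝ) i.castSucc)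
            ((Fin.cons x v : Fin (m+2) → ℝ) i.succ))
          * L ((Fin.cons x v : Fin (m+2) → ℝ) (Fin.last (m+1))) x
        ∂(Measure.pi fun _ : Fin (m+1) => μ01)) = iterK L (m+1) x x :=
    fun x => chain_int hL hC (m+1) x x
  simp only [hinner]
  rfl
end

section
/- Let σ be a permutation of {1,…,k} with disjoint cycle decomposition into cycles ε ∈ S(σ) of nonempty support, let c(σ) be the cardinality of the support of σ, and let K : [0,1]×[0,1] → ℂ be a continuous kernel with K(x,x) integrable. Then ∫_{[0,1]^k} ∏_{i=1}^k K(u_i, u_{σ(i)}) du = tr(K)^{k - c(σ)} · ∏_{ε ∈ S(σ)} tr(K^(c(ε))), where c(ε) is the length of the cycle ε. -/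
open MeasureTheory Finset

namespace PermIntegralAux


noncomputable def μI : Measure ℝ := volume.restrict (Set.Icc (0:ℝ) 1)

instance : IsProbabilityMeasure μI := by
  constructor
  simp [μI, Real.volume_Icc]

noncomputable def piμ (ι : Type*) [Fintype ι] : Measure (ι → ℝ) :=
  Measure.pi fun _ => μI

instance (ι : Type*) [Fintype ι] : IsProbabilityMeasure (piμ ι) :=
  Measure.pi.instIsProbabilityMeasure _

lemma piμ_eq_restrict (ι : Type*) [Fintype ι] :
    piμ ι = (Measure.pi fun _ : ι => (volume : Measure ℝ)).restrict
      (Set.univ.pi fun _ => Set.Icc (0:ℝ) 1) := by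
  refine Measure.pi_eq fun s hs => ?_
  rw [Measure.restrict_apply (MeasurableSet.univ_pi hs)]
  rw [← Set.pi_inter_distrib, Measure.pi_pi]
  simp only [μI, Measure.restrict_apply (hs _)]

lemma integrable_restrict_of_continuousOn {α : Type*} [MeasurableSpace α] [TopologicalSpace α]
    [OpensMeasurableSpace α] [SecondCountableTopology α] {ρ : Measure α} {s : Set α}
    (hs : IsCompact s) (hsm : MeasurableSet s) (hρ : ρ s ≠ ⊤) {f : α → ℂ}
    (hf : ContinuousOn f s) : Integrable f (ρ.restrict s) := by
  obtain ⟨C, hC⟩ := hs.exists_bound_of_continuousOn hf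
  have : IsFiniteMeasure (ρ.restrict s) :=
    ⟨by rwa [Measure.restrict_apply_univ, lt_top_iff_ne_top]⟩
  exact (integrable_const C).mono' (hf.aestronglyMeasurable hsm) ((ae_restrict_mem hsm).mono hC)

lemma integrable_pi {ι : Type*} [Fintype ι] {f : (ι → ℝ) → ℂ}
    (hf : ContinuousOn f (Set.univ.pi fun _ => Set.Icc (0:ℝ) 1)) : Integrable f (piμ ι) := by
  rw [piμ_eq_restrict]
  refine integrable_restrict_of_continuousOn (isCompact_univ_pi fun _ => isCompact_Icc)
    (MeasurableSet.univ_pi fun _ => measurableSet_Icc) ?_ hf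
  rw [Measure.pi_pi]
  simp [Real.volume_Icc]

lemma prod_eq_restrict (ι : Type*) [Fintype ι] :
    μI.prod (piμ ι) = ((volume : Measure ℝ).prod (Measure.pi fun _ : ι => (volume : Measure ℝ))).restrict
      (Set.Icc (0:ℝ) 1 ×ˢ Set.univ.pi fun _ => Set.Icc (0:ℝ) 1) := by
  rw [piμ_eq_restrict, ← Measure.prod_restrict]
  rfl

lemma integrable_prod_pi {ι : Type*} [Fintype ι] {f : ℝ × (ι → ℝ) → ℂ}
    (hf : ContinuousOn f (Set.Icc (0:ℝ) 1 ×ˢ Set.univ.pi fun _ => Set.Icc (0:ℝ) 1)) :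
    Integrable f (μI.prod (piμ ι)) := by
  rw [prod_eq_restrict]
  refine integrable_restrict_of_continuousOn
    (isCompact_Icc.prod (isCompact_univ_pi fun _ => isCompact_Icc))
    (measurableSet_Icc.prod (MeasurableSet.univ_pi fun _ => measurableSet_Icc)) ?_ hf
  rw [Measure.prod_prod, Measure.pi_pi]
  simp [Real.volume_Icc]

lemma continuousOn_finset_prod {α κ : Type*} [TopologicalSpace α] (s : Finset κ)
    (f : κ → α → ℂ) {t : Set α} (h : ∀ j ∈ s, ContinuousOn (f j) t) :
    ContinuousOn (fun x => ∏ j ∈ s, f j x) t := by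
  classical
  induction s using Finset.induction with
  | empty => simpa using continuousOn_const
  | insert _ _ hj ih =>
    rename_i a s'
    simp only [Finset.prod_insert hj]
    exact (h a (Finset.mem_insert_self a s')).mul (ih fun j hjs => h j (Finset.mem_insert_of_mem hjs))







lemma integral_reindex {ι ι' : Type*} [Fintype ι] [Fintype ι'] (e : ι' ≃ ι)
    (F : (ι → ℝ) → ℂ) :
    ∫ x, F x ∂piμ ι = ∫ y, F (fun i => y (e.symm i)) ∂piμ ι' := by
  have mp := measurePreserving_piCongrLeft (fun _ : ι => μI) e
  simp only [piμ]
  rw [← mp.integral_comp' (g := F)]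
  refine integral_congr_ae (Filter.Eventually.of_forall fun y => ?_)
  show F ((MeasurableEquiv.piCongrLeft (fun _ => ℝ) e) y) = F fun i => y (e.symm i)
  congr 1
  funext i
  conv_lhs => rw [← e.apply_symm_apply i]
  rw [MeasurableEquiv.coe_piCongrLeft, Equiv.piCongrLeft_apply_apply]

lemma integral_pi_prod_fin : ∀ (n : ℕ) (f : Fin n → ℝ → ℂ),
    ∫ x, ∏ i, f i (x i) ∂piμ (Fin n) = ∏ i, ∫ t, f i t ∂μI := by
  intro n
  induction n with
  | zero => intro f; simp [integral_const]
  | succ n ih =>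
    intro f
    have mp := measurePreserving_piFinSuccAbove (fun _ : Fin (n+1) => μI) 0
    have h1 : ∫ x, ∏ i, f i (x i) ∂piμ (Fin (n+1))
        = ∫ p : ℝ × (Fin n → ℝ), (fun q : ℝ × (Fin n → ℝ) =>
            f 0 q.1 * ∏ j : Fin n, f j.succ (q.2 j)) p ∂(μI.prod (piμ (Fin n))) := by
      simp only [piμ]
      rw [← mp.integral_comp' (g := fun q : ℝ × (Fin n → ℝ) =>
            f 0 q.1 * ∏ j : Fin n, f j.succ (q.2 j))]
      refine integral_congr_ae (Filter.Eventually.of_forall fun x => ?_)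
      show ∏ i, f i (x i) = f 0 (((MeasurableEquiv.piFinSuccAbove (fun _ => ℝ) 0) x).1) *
        ∏ j : Fin n, f j.succ (((MeasurableEquiv.piFinSuccAbove (fun _ => ℝ) 0) x).2 j)
      rw [Fin.prod_univ_succ]
      simp [MeasurableEquiv.piFinSuccAbove, Fin.zero_succAbove, Fin.tail]
    have h2 : ∫ p : ℝ × (Fin n → ℝ), (fun q : ℝ × (Fin n → ℝ) =>
          f 0 q.1 * ∏ j : Fin n, f j.succ (q.2 j)) p ∂(μI.prod (piμ (Fin n)))
        = (∫ t, f 0 t ∂μI) * ∫ y : (Fin n → ℝ), ∏ j : Fin n, f j.succ (y j) ∂piμ (Fin n) := by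
      exact integral_prod_mul (fun t => f 0 t) (fun y : Fin n → ℝ => ∏ j : Fin n, f j.succ (y j))
    rw [h1, h2, ih, Fin.prod_univ_succ]

lemma integral_pi_prod {ι : Type*} [Fintype ι] (f : ι → ℝ → ℂ) :
    ∫ x, ∏ i, f i (x i) ∂piμ ι = ∏ i, ∫ t, f i t ∂μI := by
  classical
  let e := (Fintype.equivFin ι).symm
  rw [integral_reindex e]
  have : ∀ y : Fin (Fintype.card ι) → ℝ,
      (∏ i, f i (y (e.symm i))) = ∏ j, f (e j) (y j) := by
    intro y
    rw [← e.prod_comp (fun i => f i (y (e.symm i)))]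
    simp
  simp_rw [this]
  rw [integral_pi_prod_fin _ (fun j => f (e j)), e.prod_comp (fun i => ∫ t, f i t ∂μI)]

lemma integral_pi_pow {ι : Type*} [Fintype ι] (f : ℝ → ℂ) :
    ∫ x : ι → ℝ, ∏ i, f (x i) ∂piμ ι = (∫ t, f t ∂μI) ^ (Fintype.card ι) := by
  rw [integral_pi_prod (fun _ => f), Finset.prod_const, Finset.card_univ]

section Kernel

variable (K : ℝ → ℝ → ℂ)

noncomputable def chain (n : ℕ) (w : Fin (n+1) → ℝ) : ℂ :=
  ∏ j : Fin n, K (w j.castSucc) (w j.succ)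

variable {K}

lemma contOn_factor (hcont : ContinuousOn (fun p : ℝ × ℝ => K p.1 p.2)
    (Set.Icc (0:ℝ) 1 ×ˢ Set.Icc (0:ℝ) 1)) {α : Type*} [TopologicalSpace α] {t : Set α} {a b : α → ℝ}
    (ha : Continuous a) (hb : Continuous b) (ha' : Set.MapsTo a t (Set.Icc (0:ℝ) 1))
    (hb' : Set.MapsTo b t (Set.Icc (0:ℝ) 1)) :
    ContinuousOn (fun x => K (a x) (b x)) t :=
  hcont.comp ((ha.prodMk hb)).continuousOn (fun x hx => Set.mk_mem_prod (ha' hx) (hb' hx))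

lemma contOn_snocCons {n : ℕ} (c : ℝ × (Fin n → ℝ) → ℝ) (hc : Continuous c)
    (hc' : Set.MapsTo c (Set.Icc (0:ℝ) 1 ×ˢ Set.univ.pi fun _ : Fin n => Set.Icc (0:ℝ) 1)
      (Set.Icc (0:ℝ) 1)) (i : Fin (n+2)) :
    Continuous (fun p : ℝ × (Fin n → ℝ) => (Fin.snoc (Fin.cons (c p) p.2) p.1 : Fin (n+2) → ℝ) i) ∧
    Set.MapsTo (fun p : ℝ × (Fin n → ℝ) => (Fin.snoc (Fin.cons (c p) p.2) p.1 : Fin (n+2) → ℝ) i)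
      (Set.Icc (0:ℝ) 1 ×ˢ Set.univ.pi fun _ : Fin n => Set.Icc (0:ℝ) 1) (Set.Icc (0:ℝ) 1) := by
  induction i using Fin.lastCases with
  | last =>
    simp only [Fin.snoc_last]
    exact ⟨continuous_fst, fun p hp => hp.1⟩
  | cast j =>
    simp only [Fin.snoc_castSucc]
    induction j using Fin.cases with
    | zero => simp only [Fin.cons_zero]; exact ⟨hc, hc'⟩
    | succ j' =>
      simp only [Fin.cons_succ]
      refine ⟨(continuous_apply j').comp continuous_snd, fun p hp => ?_⟩
      have := hp.2
      rw [Set.mem_univ_pi] at this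
      exact this j'

lemma contOn_chain_snocCons (hcont : ContinuousOn (fun p : ℝ × ℝ => K p.1 p.2)
    (Set.Icc (0:ℝ) 1 ×ˢ Set.Icc (0:ℝ) 1)) {n : ℕ} (c : ℝ × (Fin n → ℝ) → ℝ) (hc : Continuous c)
    (hc' : Set.MapsTo c (Set.Icc (0:ℝ) 1 ×ˢ Set.univ.pi fun _ : Fin n => Set.Icc (0:ℝ) 1)
      (Set.Icc (0:ℝ) 1)) :
    ContinuousOn (fun p : ℝ × (Fin n → ℝ) => chain K (n+1) (Fin.snoc (Fin.cons (c p) p.2) p.1))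
      (Set.Icc (0:ℝ) 1 ×ˢ Set.univ.pi fun _ : Fin n => Set.Icc (0:ℝ) 1) := by
  unfold chain
  refine continuousOn_finset_prod _ _ fun j _ => ?_
  exact contOn_factor hcont (contOn_snocCons c hc hc' j.castSucc).1
    (contOn_snocCons c hc hc' j.succ).1 (contOn_snocCons c hc hc' j.castSucc).2
    (contOn_snocCons c hc hc' j.succ).2

lemma chain_snoc_step (n : ℕ) (y z t : ℝ) (x' : Fin n → ℝ) :
    chain K (n+2) (Fin.snoc (Fin.cons y (Fin.snoc x' t)) z)
      = chain K (n+1) (Fin.snoc (Fin.cons y x') t) * K t z := by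
  have hw : ∀ i : Fin (n+2), (Fin.snoc (Fin.cons y (Fin.snoc x' t)) z : Fin (n+3) → ℝ) i.castSucc
      = (Fin.snoc (Fin.cons y x') t : Fin (n+2) → ℝ) i := by
    intro i
    rw [Fin.snoc_castSucc, Fin.cons_snoc_eq_snoc_cons]
  unfold chain
  rw [Fin.prod_univ_castSucc]
  congr 1
  · refine Finset.prod_congr rfl fun j _ => ?_
    rw [Fin.succ_castSucc, hw j.castSucc, hw j.succ]
  · rw [hw (Fin.last (n+1)), Fin.snoc_last, Fin.succ_last, Fin.snoc_last]

lemma path_integral (hcont : ContinuousOn (fun p : ℝ × ℝ => K p.1 p.2)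
    (Set.Icc (0:ℝ) 1 ×ˢ Set.Icc (0:ℝ) 1)) :
    ∀ (n : ℕ) {y z : ℝ}, y ∈ Set.Icc (0:ℝ) 1 → z ∈ Set.Icc (0:ℝ) 1 →
    ∫ x : Fin n → ℝ, chain K (n+1) (Fin.snoc (Fin.cons y x) z) ∂piμ (Fin n) = iterK K n y z := by
  intro n
  induction n with
  | zero =>
    intro y z hy hz
    have h0 : ∀ x : Fin 0 → ℝ, chain K 1 (Fin.snoc (Fin.cons y x) z) = K y z := by
      intro x
      unfold chain
      rw [Fin.prod_univ_one]
      rw [show ((0 : Fin 1).succ) = Fin.last 1 from rfl, Fin.snoc_last,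
        show ((0 : Fin 1).castSucc) = Fin.castSucc 0 from rfl, Fin.snoc_castSucc, Fin.cons_zero]
    simp_rw [h0]
    simp [integral_const]
    rfl
  | succ n ih =>
    intro y z hy hz
    set G : ℝ × (Fin n → ℝ) → ℂ :=
      fun p => chain K (n+1) (Fin.snoc (Fin.cons y p.2) p.1) * K p.1 z with hG
    have mp := measurePreserving_piFinSuccAbove (fun _ : Fin (n+1) => μI) (Fin.last n)
    have h1 : ∫ x : Fin (n+1) → ℝ, chain K (n+2) (Fin.snoc (Fin.cons y x) z) ∂piμ (Fin (n+1))
        = ∫ p, G p ∂(μI.prod (piμ (Fin n))) := by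
      simp only [piμ]
      rw [← mp.integral_comp' (g := G)]
      refine integral_congr_ae (Filter.Eventually.of_forall fun x => ?_)
      show chain K (n+2) (Fin.snoc (Fin.cons y x) z)
        = G ((MeasurableEquiv.piFinSuccAbove (fun _ : Fin (n+1) => ℝ) (Fin.last n)) x)
      have hx : x = Fin.snoc (Fin.init x) (x (Fin.last n)) := (Fin.snoc_init_self x).symm
      conv_lhs => rw [hx]
      rw [chain_snoc_step]
      rw [hG]
      simp only [MeasurableEquiv.piFinSuccAbove_apply]
      congr 2
      · funext j
        simp [Fin.succAbove_last, Fin.init]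
    have hGcont : ContinuousOn G
        (Set.Icc (0:ℝ) 1 ×ˢ Set.univ.pi fun _ : Fin n => Set.Icc (0:ℝ) 1) := by
      refine (contOn_chain_snocCons hcont (fun _ => y) continuous_const
        (fun p hp => hy)).mul ?_
      exact contOn_factor hcont continuous_fst continuous_const
        (fun p hp => hp.1) (fun p hp => hz)
    have hGint : Integrable G (μI.prod (piμ (Fin n))) := integrable_prod_pi hGcont
    rw [h1, integral_prod G hGint]
    have h2 : ∀ t : ℝ, t ∈ Set.Icc (0:ℝ) 1 →
        ∫ x' : Fin n → ℝ, G (t, x') ∂piμ (Fin n) = iterK K n y t * K t z := by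
      intro t ht
      rw [hG]
      simp only
      rw [integral_mul_const, ih hy ht]
    have h3 : ∫ t, (∫ x' : Fin n → ℝ, G (t, x') ∂piμ (Fin n)) ∂μI
        = ∫ t, iterK K n y t * K t z ∂μI := by
      refine integral_congr_ae ?_
      have : ∀ᵐ t ∂μI, t ∈ Set.Icc (0:ℝ) 1 := by
        rw [μI]
        exact ae_restrict_mem measurableSet_Icc
      exact this.mono fun t ht => h2 t ht
    rw [h3]
    rfl

lemma cyc_eq_chain {n : ℕ} (x : Fin (n+1) → ℝ) :
    ∏ j : Fin (n+1), K (x j) (x (j+1)) = chain K (n+1) (Fin.snoc x (x 0)) := by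
  have hsucc : ∀ j : Fin (n+1), (Fin.snoc x (x 0) : Fin (n+2) → ℝ) j.succ = x (j+1) := by
    intro j
    by_cases hj : j = Fin.last n
    · subst hj
      rw [Fin.succ_last, Fin.snoc_last, Fin.last_add_one]
    · have hcast : j.succ = (j+1).castSucc := by
        ext
        simp [Fin.val_add_one, hj]
      rw [hcast, Fin.snoc_castSucc]
  unfold chain
  refine Finset.prod_congr rfl fun j _ => ?_
  rw [Fin.snoc_castSucc, hsucc]

lemma ring_integral (hcont : ContinuousOn (fun p : ℝ × ℝ => K p.1 p.2)
    (Set.Icc (0:ℝ) 1 ×ˢ Set.Icc (0:ℝ) 1)) (n : ℕ) :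
    ∫ x : Fin (n+1) → ℝ, ∏ j : Fin (n+1), K (x j) (x (j+1)) ∂piμ (Fin (n+1))
      = ∫ t, iterK K n t t ∂μI := by
  simp_rw [cyc_eq_chain]
  set G : ℝ × (Fin n → ℝ) → ℂ :=
    fun p => chain K (n+1) (Fin.snoc (Fin.cons p.1 p.2) p.1) with hG
  have mp := measurePreserving_piFinSuccAbove (fun _ : Fin (n+1) => μI) 0
  have h1 : ∫ x : Fin (n+1) → ℝ, chain K (n+1) (Fin.snoc x (x 0)) ∂piμ (Fin (n+1))
      = ∫ p, G p ∂(μI.prod (piμ (Fin n))) := by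
    simp only [piμ]
    rw [← mp.integral_comp' (g := G)]
    refine integral_congr_ae (Filter.Eventually.of_forall fun x => ?_)
    show chain K (n+1) (Fin.snoc x (x 0))
      = G ((MeasurableEquiv.piFinSuccAbove (fun _ : Fin (n+1) => ℝ) 0) x)
    rw [hG]
    simp only [MeasurableEquiv.piFinSuccAbove_apply, Fin.insertNthEquiv, Equiv.coe_fn_symm_mk]
    congr 1
    rw [Fin.removeNth_zero, Fin.cons_self_tail]
  have hGcont : ContinuousOn G
      (Set.Icc (0:ℝ) 1 ×ˢ Set.univ.pi fun _ : Fin n => Set.Icc (0:ℝ) 1) :=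
    contOn_chain_snocCons hcont Prod.fst continuous_fst (fun p hp => hp.1)
  have hGint : Integrable G (μI.prod (piμ (Fin n))) := integrable_prod_pi hGcont
  rw [h1, integral_prod G hGint]
  refine integral_congr_ae ?_
  have hae : ∀ᵐ t ∂μI, t ∈ Set.Icc (0:ℝ) 1 := by
    rw [μI]; exact ae_restrict_mem measurableSet_Icc
  refine hae.mono fun t ht => ?_
  exact path_integral hcont n ht ht

lemma cycle_trace {k : ℕ} (hcont : ContinuousOn (fun p : ℝ × ℝ => K p.1 p.2)
    (Set.Icc (0:ℝ) 1 ×ˢ Set.Icc (0:ℝ) 1)) (ε : Equiv.Perm (Fin k)) (hc : ε.IsCycle) :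
    ∫ a : ({i // i ∈ ε.support} → ℝ), ∏ i : {i // i ∈ ε.support},
        K (a i) (a ⟨ε i.1, Equiv.Perm.apply_mem_support.2 i.2⟩) ∂piμ {i // i ∈ ε.support}
      = ∫ t, iterK K (ε.support.card - 1) t t ∂μI := by
  classical
  obtain ⟨a0, ha0, -⟩ := id hc
  have ha0' : a0 ∈ ε.support := Equiv.Perm.mem_support.2 ha0
  have hm1 : 1 ≤ ε.support.card := Finset.card_pos.mpr ⟨a0, ha0'⟩
  obtain ⟨n, hn⟩ : ∃ n, ε.support.card = n + 1 := ⟨ε.support.card - 1, by omega⟩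
  have hord : orderOf ε = n + 1 := hc.orderOf.trans hn
  have hmem : ∀ j : Fin (n+1), (ε ^ (j : ℕ)) a0 ∈ ε.support := fun j =>
    Equiv.Perm.pow_apply_mem_support.2 ha0'
  set toF : Fin (n+1) → {i // i ∈ ε.support} := fun j => ⟨(ε ^ (j : ℕ)) a0, hmem j⟩ with htoF
  have hinj : Function.Injective toF := by
    intro i j hij
    have h1 : (ε ^ (i : ℕ)) a0 = (ε ^ (j : ℕ)) a0 := congrArg Subtype.val hij
    have h2 : ε ^ (i : ℕ) = ε ^ (j : ℕ) := hc.pow_eq_pow_iff.2 ⟨a0, ha0, h1⟩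
    have h3 : (i : ℕ) = (j : ℕ) := by
      refine pow_injOn_Iio_orderOf ?_ ?_ h2 <;>
        simp [Set.mem_Iio, hord, i.isLt, j.isLt]
    exact Fin.ext h3
  have hbij : Function.Bijective toF := by
    rw [Fintype.bijective_iff_injective_and_card]
    refine ⟨hinj, ?_⟩
    rw [Fintype.card_fin, Fintype.card_coe, hn]
  set e : Fin (n+1) ≃ {i // i ∈ ε.support} := Equiv.ofBijective toF hbij with he
  have hstep : ∀ j : Fin (n+1), (⟨ε (e j).1, Equiv.Perm.apply_mem_support.2 (e j).2⟩ :
      {i // i ∈ ε.support}) = e (j + 1) := by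
    intro j
    apply Subtype.ext
    show ε ((ε ^ (j : ℕ)) a0) = (ε ^ ((j + 1 : Fin (n+1)) : ℕ)) a0
    have h4 : ((j + 1 : Fin (n+1)) : ℕ) = ((j : ℕ) + 1) % (n+1) := by
      rw [Fin.add_def, Fin.val_one']
      conv_rhs => rw [Nat.add_mod, Nat.mod_eq_of_lt j.isLt]
    have h5 : ε ^ (((j : ℕ) + 1) % (n + 1)) = ε ^ ((j : ℕ) + 1) := by
      rw [pow_eq_pow_iff_modEq, hord]
      exact Nat.mod_modEq _ _
    rw [h4, h5, pow_succ']
    rfl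
  rw [integral_reindex e]
  have hprod : ∀ y : Fin (n+1) → ℝ,
      (∏ i : {i // i ∈ ε.support},
        K (y (e.symm i)) (y (e.symm ⟨ε i.1, Equiv.Perm.apply_mem_support.2 i.2⟩)))
      = ∏ j : Fin (n+1), K (y j) (y (j + 1)) := by
    intro y
    rw [← e.prod_comp (fun i => K (y (e.symm i)) (y (e.symm
      ⟨ε i.1, Equiv.Perm.apply_mem_support.2 i.2⟩)))]
    refine Finset.prod_congr rfl fun j _ => ?_
    rw [hstep j]
    simp
  simp_rw [hprod]
  rw [show ε.support.card - 1 = n from by omega]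
  exact ring_integral hcont n
def permApply {k : ℕ} (σ : Equiv.Perm (Fin k)) (s : Finset (Fin k)) (h : σ.support ⊆ s)
    (i : {i // i ∈ s}) : {i // i ∈ s} :=
  ⟨σ i.1, by
    by_cases hi : i.1 ∈ σ.support
    · exact h (Equiv.Perm.apply_mem_support.2 hi)
    · rw [Equiv.Perm.notMem_support.mp hi]
      exact i.2⟩

@[simp] lemma permApply_coe {k : ℕ} (σ : Equiv.Perm (Fin k)) (s : Finset (Fin k))
    (h : σ.support ⊆ s) (i : {i // i ∈ s}) : (permApply σ s h i).1 = σ i.1 := rfl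

lemma main_one {k : ℕ} (s : Finset (Fin k)) (hs : (1 : Equiv.Perm (Fin k)).support ⊆ s) :
    ∫ x : ({i // i ∈ s} → ℝ), ∏ i : {i // i ∈ s},
        K (x i) (x (permApply 1 s hs i)) ∂piμ {i // i ∈ s}
      = (∫ t, K t t ∂μI) ^ s.card := by
  have hid : ∀ i, permApply (1 : Equiv.Perm (Fin k)) s hs i = i := fun i => Subtype.ext rfl
  simp_rw [hid]
  have h := integral_pi_pow (ι := {i // i ∈ s}) (fun t => K t t)
  rw [Fintype.card_coe] at h
  exact h

lemma tau_spec {k : ℕ} (σ ε : Equiv.Perm (Fin k)) (hε : ε ∈ σ.cycleFactorsFinset) :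
    (σ * ε⁻¹).support = σ.support \ ε.support ∧
      (∀ i, i ∉ ε.support → (σ * ε⁻¹) i = σ i) := by
  obtain ⟨hc, hagree⟩ := Equiv.Perm.mem_cycleFactorsFinset_iff.mp hε
  have hoff : ∀ i, i ∉ ε.support → (σ * ε⁻¹) i = σ i := by
    intro i hi
    have h1 : ε⁻¹ i = i := by
      have h0 : ε i = i := Equiv.Perm.notMem_support.mp hi
      conv_lhs => rw [← h0]
      exact ε.symm_apply_apply i
    show σ (ε⁻¹ i) = σ i
    rw [h1]
  have hon : ∀ i, i ∈ ε.support → (σ * ε⁻¹) i = i := by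
    intro i hi
    have h1 : ε⁻¹ i ∈ ε.support := by
      rw [← Equiv.Perm.support_inv]
      refine Equiv.Perm.apply_mem_support.2 ?_
      rwa [Equiv.Perm.support_inv]
    show σ (ε⁻¹ i) = i
    rw [← hagree _ h1, Equiv.Perm.coe_inv, Equiv.apply_symm_apply]
  refine ⟨?_, hoff⟩
  ext i
  rw [Finset.mem_sdiff, Equiv.Perm.mem_support, Equiv.Perm.mem_support]
  by_cases hi : i ∈ ε.support
  · simp [hon i hi, hi]
  · rw [hoff i hi]
    simp [hi]

lemma sigma_inv_support {k : ℕ} (σ ε : Equiv.Perm (Fin k)) (hε : ε ∈ σ.cycleFactorsFinset) :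
    ∀ i : Fin k, σ i ∈ ε.support ↔ i ∈ ε.support := by
  obtain ⟨hc, hagree⟩ := Equiv.Perm.mem_cycleFactorsFinset_iff.mp hε
  intro i
  constructor
  · intro hσi
    have h1 : ε⁻¹ (σ i) ∈ ε.support := by
      rw [← Equiv.Perm.support_inv]
      refine Equiv.Perm.apply_mem_support.2 ?_
      rwa [Equiv.Perm.support_inv]
    have h2 : σ (ε⁻¹ (σ i)) = σ i := by
      rw [← hagree _ h1, Equiv.Perm.coe_inv, Equiv.apply_symm_apply]
    have h3 : ε⁻¹ (σ i) = i := σ.injective h2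
    rwa [h3] at h1
  · intro hi
    rw [← hagree _ hi]
    exact Equiv.Perm.apply_mem_support.2 hi

lemma main_integral {k : ℕ} (hcont : ContinuousOn (fun p : ℝ × ℝ => K p.1 p.2)
    (Set.Icc (0:ℝ) 1 ×ˢ Set.Icc (0:ℝ) 1)) :
    ∀ (N : ℕ) (σ : Equiv.Perm (Fin k)), σ.support.card ≤ N →
    ∀ (s : Finset (Fin k)) (hs : σ.support ⊆ s),
    ∫ x : ({i // i ∈ s} → ℝ), ∏ i : {i // i ∈ s},
        K (x i) (x (permApply σ s hs i)) ∂piμ {i // i ∈ s}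
      = (∫ t, K t t ∂μI) ^ (s.card - σ.support.card) *
        ∏ ε ∈ σ.cycleFactorsFinset, ∫ t, iterK K (ε.support.card - 1) t t ∂μI := by
  intro N
  induction N with
  | zero =>
    intro σ hσ s hs
    have hσ1 : σ = 1 := Equiv.Perm.support_eq_empty_iff.mp
      (Finset.card_eq_zero.mp (Nat.le_zero.mp hσ))
    subst hσ1
    rw [main_one s hs]
    simp [Equiv.Perm.cycleFactorsFinset_one]
  | succ N ih =>
    intro σ hσ s hs
    by_cases hσ1 : σ = 1
    · subst hσ1
      rw [main_one s hs]
      simp [Equiv.Perm.cycleFactorsFinset_one]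
    · classical
      obtain ⟨ε, hε⟩ := Finset.nonempty_iff_ne_empty.mpr
        (fun h => hσ1 (Equiv.Perm.cycleFactorsFinset_eq_empty_iff.mp h))
      obtain ⟨hc, hagree⟩ := Equiv.Perm.mem_cycleFactorsFinset_iff.mp hε
      have hεσ : ε.support ⊆ σ.support := Equiv.Perm.mem_cycleFactorsFinset_support_le hε
      obtain ⟨hτsupp, hτoff⟩ := tau_spec σ ε hε
      have hinv := sigma_inv_support σ ε hε
      have hεs : ε.support ⊆ s := hεσ.trans hs
      have hτs' : (σ * ε⁻¹).support ⊆ s \ ε.support := by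
        rw [hτsupp]; exact Finset.sdiff_subset_sdiff hs (le_refl _)
      have hεc1 : 1 ≤ ε.support.card := le_trans one_le_two hc.two_le_card_support
      have hσs : σ.support.card ≤ s.card := Finset.card_le_card hs
      have hεcσ : ε.support.card ≤ σ.support.card := Finset.card_le_card hεσ
      have hεsc : ε.support.card ≤ s.card := Finset.card_le_card hεs
      have hτc : (σ * ε⁻¹).support.card = σ.support.card - ε.support.card := by
        rw [hτsupp, Finset.card_sdiff_of_subset hεσ]
      have hs'c : (s \ ε.support).card = s.card - ε.support.card := Finset.card_sdiff_of_subset hεs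
      have hτN : (σ * ε⁻¹).support.card ≤ N := by omega
      have hcycτ : (σ * ε⁻¹).cycleFactorsFinset = σ.cycleFactorsFinset \ {ε} :=
        Equiv.Perm.cycleFactorsFinset_mul_inv_mem_eq_sdiff hε
      set p : {i // i ∈ s} → Prop := fun i => i.1 ∈ ε.support with hp
      have hpApply : ∀ i : {i // i ∈ s}, p i → p (permApply σ s hs i) :=
        fun i hi => (hinv i.1).mpr hi
      have hnpApply : ∀ i : {i // i ∈ s}, ¬ p i → ¬ p (permApply σ s hs i) :=
        fun i hi hcon => hi ((hinv i.1).mp hcon)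
      set Fp : ({i : {i // i ∈ s} // p i} → ℝ) → ℂ := fun a =>
        ∏ i : {i : {i // i ∈ s} // p i},
          K (a i) (a ⟨permApply σ s hs i.1, hpApply i.1 i.2⟩) with hFp
      set Gp : ({i : {i // i ∈ s} // ¬ p i} → ℝ) → ℂ := fun b =>
        ∏ i : {i : {i // i ∈ s} // ¬ p i},
          K (b i) (b ⟨permApply σ s hs i.1, hnpApply i.1 i.2⟩) with hGp
      have mp := measurePreserving_piEquivPiSubtypeProd (fun _ : {i // i ∈ s} => μI) p
      have hA : ∫ x : ({i // i ∈ s} → ℝ), ∏ i : {i // i ∈ s},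
          K (x i) (x (permApply σ s hs i)) ∂piμ {i // i ∈ s}
          = ∫ q, Fp q.1 * Gp q.2
              ∂((piμ {i : {i // i ∈ s} // p i}).prod (piμ {i : {i // i ∈ s} // ¬ p i})) := by
        simp only [piμ]
        rw [← mp.integral_comp' (g := fun q => Fp q.1 * Gp q.2)]
        refine integral_congr_ae (Filter.Eventually.of_forall fun x => ?_)
        show ∏ i : {i // i ∈ s}, K (x i) (x (permApply σ s hs i))
          = Fp ((MeasurableEquiv.piEquivPiSubtypeProd (fun _ : {i // i ∈ s} => ℝ) p) x).1
            * Gp ((MeasurableEquiv.piEquivPiSubtypeProd (fun _ : {i // i ∈ s} => ℝ) p) x).2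
        rw [← Fintype.prod_subtype_mul_prod_subtype p
          (fun i => K (x i) (x (permApply σ s hs i)))]
        rw [hFp, hGp]
        congr 1
      have hB : ∫ q, Fp q.1 * Gp q.2
            ∂((piμ {i : {i // i ∈ s} // p i}).prod (piμ {i : {i // i ∈ s} // ¬ p i}))
          = (∫ a, Fp a ∂piμ {i : {i // i ∈ s} // p i})
            * ∫ b, Gp b ∂piμ {i : {i // i ∈ s} // ¬ p i} := integral_prod_mul Fp Gp
      set e1 : {i : {i // i ∈ s} // p i} ≃ {j // j ∈ ε.support} :=
        ⟨fun i => ⟨i.1.1, i.2⟩, fun j => ⟨⟨j.1, hεs j.2⟩, j.2⟩,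
          by rintro ⟨⟨v, hv⟩, hq⟩; rfl, by rintro ⟨v, hv⟩; rfl⟩ with he1
      have hC : ∫ a, Fp a ∂piμ {i : {i // i ∈ s} // p i}
          = ∫ t, iterK K (ε.support.card - 1) t t ∂μI := by
        rw [integral_reindex e1.symm]
        have hy : ∀ y : ({j // j ∈ ε.support} → ℝ),
            Fp (fun i => y (e1.symm.symm i))
              = ∏ j : {j // j ∈ ε.support},
                  K (y j) (y ⟨ε j.1, Equiv.Perm.apply_mem_support.2 j.2⟩) := by
          intro y
          rw [hFp]
          simp only [Equiv.symm_symm]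
          rw [← e1.symm.prod_comp (fun i => K (y (e1 i))
            (y (e1 ⟨permApply σ s hs i.1, hpApply i.1 i.2⟩)))]
          refine Finset.prod_congr rfl fun j _ => ?_
          congr 1
          exact congrArg y (Subtype.ext (hagree j.1 j.2).symm)
        simp_rw [hy]
        exact cycle_trace hcont ε hc
      set e2 : {i : {i // i ∈ s} // ¬ p i} ≃ {j // j ∈ s \ ε.support} :=
        ⟨fun i => ⟨i.1.1, Finset.mem_sdiff.2 ⟨i.1.2, i.2⟩⟩,
          fun j => ⟨⟨j.1, (Finset.mem_sdiff.1 j.2).1⟩, (Finset.mem_sdiff.1 j.2).2⟩,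
          by rintro ⟨⟨v, hv⟩, hq⟩; rfl, by rintro ⟨v, hv⟩; rfl⟩ with he2
      have hD : ∫ b, Gp b ∂piμ {i : {i // i ∈ s} // ¬ p i}
          = ∫ x : ({j // j ∈ s \ ε.support} → ℝ), ∏ j : {j // j ∈ s \ ε.support},
              K (x j) (x (permApply (σ * ε⁻¹) (s \ ε.support) hτs' j))
              ∂piμ {j // j ∈ s \ ε.support} := by
        rw [integral_reindex e2.symm]
        refine integral_congr_ae (Filter.Eventually.of_forall fun y => ?_)
        show Gp (fun i => y (e2.symm.symm i)) = _
        rw [hGp]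
        simp only [Equiv.symm_symm]
        rw [← e2.symm.prod_comp (fun i => K (y (e2 i))
          (y (e2 ⟨permApply σ s hs i.1, hnpApply i.1 i.2⟩)))]
        refine Finset.prod_congr rfl fun j _ => ?_
        congr 1
        exact congrArg y (Subtype.ext (hτoff j.1 (Finset.mem_sdiff.1 j.2).2).symm)
      rw [hA, hB, hC, hD, ih (σ * ε⁻¹) hτN (s \ ε.support) hτs']
      rw [hcycτ]
      rw [Finset.prod_eq_prod_diff_singleton_mul hε
        (fun ε' => ∫ t, iterK K (ε'.support.card - 1) t t ∂μI)]
      have hexp : (s \ ε.support).card - (σ * ε⁻¹).support.card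
          = s.card - σ.support.card := by omega
      rw [hexp]
      ring

end Kernel

end PermIntegralAux

/-- For a permutation `σ` of `{1,…,k}` with disjoint cycle decomposition `S(σ)` and support
of cardinality `c(σ)`, and a continuous kernel `K` on `[0,1]²` with integrable diagonal,
`∫_{[0,1]^k} ∏_i K(u_i, u_{σ(i)}) du = tr(K)^{k−c(σ)} ∏_{ε∈S(σ)} tr(K^{(c(ε))})`. -/
theorem perm_integral_eq_prod_cycle_traces (k : ℕ) (σ : Equiv.Perm (Fin k))
    (K : ℝ → ℝ → ℂ)
    (hcont : ContinuousOn (fun p : ℝ × ℝ => K p.1 p.2)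
      (Set.Icc (0:ℝ) 1 ×ˢ Set.Icc (0:ℝ) 1))
    (hdiag : IntegrableOn (fun x => K x x) (Set.Icc (0:ℝ) 1)) :
    (∫ u in Set.univ.pi (fun _ : Fin k => Set.Icc (0:ℝ) 1),
        ∏ i : Fin k, K (u i) (u (σ i)))
      = (∫ x in Set.Icc (0:ℝ) 1, K x x) ^ (k - σ.support.card) *
        ∏ ε ∈ σ.cycleFactorsFinset,
          ∫ x in Set.Icc (0:ℝ) 1, iterK K (ε.support.card - 1) x x := by

  classical
  open PermIntegralAux in
  have hμ : μI = volume.restrict (Set.Icc (0:ℝ) 1) := rfl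
  have hL : (∫ u in Set.univ.pi (fun _ : Fin k => Set.Icc (0:ℝ) 1),
        ∏ i : Fin k, K (u i) (u (σ i)))
      = ∫ u : Fin k → ℝ, ∏ i : Fin k, K (u i) (u (σ i)) ∂piμ (Fin k) := by
    rw [piμ_eq_restrict, ← MeasureTheory.volume_pi]
  have hs : σ.support ⊆ (Finset.univ : Finset (Fin k)) := Finset.subset_univ _
  let e : {i // i ∈ (Finset.univ : Finset (Fin k))} ≃ Fin k :=
    Equiv.subtypeUnivEquiv (fun x => Finset.mem_univ x)
  have hR : ∫ u : Fin k → ℝ, ∏ i : Fin k, K (u i) (u (σ i)) ∂piμ (Fin k)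
      = ∫ x : ({i // i ∈ (Finset.univ : Finset (Fin k))} → ℝ),
          ∏ i : {i // i ∈ (Finset.univ : Finset (Fin k))},
            K (x i) (x (permApply σ Finset.univ hs i)) ∂piμ _ := by
    rw [integral_reindex e]
    refine integral_congr_ae (Filter.Eventually.of_forall fun y => ?_)
    show ∏ i : Fin k, K (y (e.symm i)) (y (e.symm (σ i))) = _
    rw [← e.prod_comp (fun i => K (y (e.symm i)) (y (e.symm (σ i))))]
    refine Finset.prod_congr rfl fun j _ => ?_
    refine congrArg₂ K (congrArg y ?_) (congrArg y ?_)
    · exact e.symm_apply_apply j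
    · apply Subtype.ext
      simp [e, Equiv.subtypeUnivEquiv]
  rw [hL, hR, main_integral hcont σ.support.card σ le_rfl Finset.univ hs]
  rw [Finset.card_univ, Fintype.card_fin]
  rfl
end
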